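/- arXiv:2402.16704 — 2 statements merged into one kernel-verified Lean document; each statement's English description precedes it below -/
import Mathlib

section
/- Let (H, m, Φ) be a weak twisted post-Hopf algebra over a field k such that Φ(1) = 1. Then Φ is idempotent: Φ ∘ Φ = Φ. -/
/-!
Write `T a = m (a ⊗ 1)`. Axiom (v) with `b = c = 1` says that `T` is idempotent for the
convolution product, and `T` is a coalgebra map because `m` is one, so `S ∘ T` is a
convolution left inverse of `T`. Hence `T = η ∘ ε`, so that `μ̄ (a ⊗ 1) = Φ a`, and axiom (iii)
at `b = 1`, together with `Φ 1 = 1`, reads `Φ (Φ a) = Φ a`.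
-/

open TensorProduct

noncomputable def mbar (k : Type*) {H : Type*} [Field k] [Ring H] [HopfAlgebra k H]
    (Φ : H →ₗ[k] H) (m : H ⊗[k] H →ₗ[k] H) : H ⊗[k] H →ₗ[k] H :=
  (LinearMap.mul' k H) ∘ₗ (TensorProduct.map Φ m) ∘ₗ
    (TensorProduct.assoc k H H H).toLinearMap ∘ₗ
    (TensorProduct.map Coalgebra.comul LinearMap.id)

open WithConv

theorem TensorProduct.tensorTensorTensorComm_tmul_tmul_eq_map {R M N P Q : Type*}
    [CommSemiring R] [AddCommMonoid M] [Module R M] [AddCommMonoid N] [Module R N]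
    [AddCommMonoid P] [Module R P] [AddCommMonoid Q] [Module R Q]
    (x : M ⊗[R] N) (p : P) (q : Q) :
    tensorTensorTensorComm R M N P Q (x ⊗ₜ (p ⊗ₜ q)) =
      map ((mk R M P).flip p) ((mk R N Q).flip q) x := by
  induction x using TensorProduct.induction_on with
  | zero => simp
  | tmul => simp
  | add x y hx hy => simp [add_tmul, hx, hy]

namespace CoalgHom

variable {R C H : Type*} [CommSemiring R] [AddCommMonoid C] [Module R C] [Coalgebra R C]
  [Semiring H] [HopfAlgebra R H]

theorem antipode_comp_convMul_self (T : C →ₗc[R] H) :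
    toConv (HopfAlgebra.antipode R ∘ₗ T.toLinearMap) * toConv T.toLinearMap = 1 := by
  have h := LinearMap.convMul_comp_coalgHom_distrib
    (toConv (HopfAlgebra.antipode R)) (toConv LinearMap.id) T
  rw [LinearMap.antipode_mul_id] at h
  ext c
  simpa using (LinearMap.congr_fun h c).symm

theorem toConv_eq_one_of_isIdempotentElem (T : C →ₗc[R] H)
    (hT : IsIdempotentElem (toConv T.toLinearMap)) : toConv T.toLinearMap = 1 :=
  calc toConv T.toLinearMap
      = toConv (HopfAlgebra.antipode R ∘ₗ T.toLinearMap) * toConv T.toLinearMap *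
          toConv T.toLinearMap := by
        rw [antipode_comp_convMul_self, one_mul]
    _ = 1 := by rw [mul_assoc, hT.eq, antipode_comp_convMul_self]

end CoalgHom

section ActOnOne

variable {R H : Type*} [CommSemiring R] [Semiring H] [Bialgebra R H]
  (m : H ⊗[R] H →ₗ[R] H)

def actOnOne : H →ₗ[R] H := m ∘ₗ (mk R H H).flip 1

@[simp] theorem actOnOne_apply (a : H) : actOnOne m a = m (a ⊗ₜ 1) := rfl

variable {m}

def actOnOneCoalgHom
    (hm_comul : Coalgebra.comul ∘ₗ m = map m m ∘ₗ
      (tensorTensorTensorComm R H H H H).toLinearMap ∘ₗ map Coalgebra.comul Coalgebra.comul)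
    (hm_counit : Coalgebra.counit ∘ₗ m =
      (TensorProduct.lid R R).toLinearMap ∘ₗ map Coalgebra.counit Coalgebra.counit) :
    H →ₗc[R] H where
  toLinearMap := actOnOne m
  counit_comp := by
    ext a
    simpa using LinearMap.congr_fun hm_counit (a ⊗ₜ 1)
  map_comp_comul := by
    ext a
    have h := LinearMap.congr_fun hm_comul (a ⊗ₜ 1)
    simp only [LinearMap.comp_apply, map_tmul, LinearEquiv.coe_coe, Bialgebra.comul_one,
      Algebra.TensorProduct.one_def, tensorTensorTensorComm_tmul_tmul_eq_map, map_map] at h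
    exact h.symm

theorem isIdempotentElem_toConv_actOnOne
    (h5 : m ∘ₗ map LinearMap.id (LinearMap.mul' R H) = LinearMap.mul' R H ∘ₗ map m m ∘ₗ
      (tensorTensorTensorComm R H H H H).toLinearMap ∘ₗ map Coalgebra.comul LinearMap.id) :
    IsIdempotentElem (toConv (actOnOne m)) := by
  ext a
  have h := LinearMap.congr_fun h5 (a ⊗ₜ (1 ⊗ₜ 1))
  simp only [LinearMap.comp_apply, map_tmul, LinearMap.id_apply, LinearMap.mul'_apply, mul_one,
    LinearEquiv.coe_coe, tensorTensorTensorComm_tmul_tmul_eq_map, map_map] at h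
  exact h.symm

end ActOnOne

theorem mbar_tmul_one {k H : Type*} [Field k] [Ring H] [HopfAlgebra k H]
    {Φ : H →ₗ[k] H} {m : H ⊗[k] H →ₗ[k] H} (hm : toConv (actOnOne m) = 1) (a : H) :
    mbar k Φ m (a ⊗ₜ 1) = Φ a :=
  calc mbar k Φ m (a ⊗ₜ 1) = (toConv Φ * toConv (actOnOne m)) a := by
        simp only [mbar, LinearMap.comp_apply, map_tmul, LinearMap.id_apply, LinearEquiv.coe_coe,
          LinearMap.convMul_apply]
        congr 1
        induction Coalgebra.comul (R := k) a using TensorProduct.induction_on with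
        | zero => simp
        | tmul => simp
        | add x y hx hy => simp [add_tmul, hx, hy]
    _ = Φ a := by rw [hm, mul_one]

theorem stmt11_general (k H : Type*) [Field k] [Ring H] [HopfAlgebra k H]
    (m : H ⊗[k] H →ₗ[k] H) (Φ : H →ₗ[k] H)
    (hm_comul : Coalgebra.comul ∘ₗ m
      = (TensorProduct.map m m) ∘ₗ (TensorProduct.tensorTensorTensorComm k H H H H).toLinearMap
          ∘ₗ (TensorProduct.map Coalgebra.comul Coalgebra.comul))
    (hm_counit : Coalgebra.counit ∘ₗ m
      = (TensorProduct.lid k k).toLinearMap ∘ₗ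
          TensorProduct.map Coalgebra.counit Coalgebra.counit)
    (h3 : Φ ∘ₗ mbar k Φ m = mbar k Φ m ∘ₗ TensorProduct.map LinearMap.id Φ)
    (h5 : m ∘ₗ TensorProduct.map LinearMap.id (LinearMap.mul' k H)
      = (LinearMap.mul' k H) ∘ₗ TensorProduct.map m m ∘ₗ
          (TensorProduct.tensorTensorTensorComm k H H H H).toLinearMap ∘ₗ
          TensorProduct.map Coalgebra.comul LinearMap.id)
    (hΦ1 : Φ 1 = 1) :
    Φ ∘ₗ Φ = Φ := by
  have hm : toConv (actOnOne m) = 1 :=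
    (actOnOneCoalgHom hm_comul hm_counit).toConv_eq_one_of_isIdempotentElem
      (isIdempotentElem_toConv_actOnOne h5)
  ext a
  simpa [hΦ1, mbar_tmul_one hm] using LinearMap.congr_fun h3 (a ⊗ₜ 1)

theorem stmt11 (k H : Type*) [Field k] [Ring H] [HopfAlgebra k H]
    (m : H ⊗[k] H →ₗ[k] H) (Φ : H →ₗ[k] H)
    (hm_comul : Coalgebra.comul ∘ₗ m
      = (TensorProduct.map m m) ∘ₗ (TensorProduct.tensorTensorTensorComm k H H H H).toLinearMap
          ∘ₗ (TensorProduct.map Coalgebra.comul Coalgebra.comul))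
    (hm_counit : Coalgebra.counit ∘ₗ m
      = (TensorProduct.lid k k).toLinearMap ∘ₗ
          TensorProduct.map Coalgebra.counit Coalgebra.counit)
    (hΦ_comul : Coalgebra.comul ∘ₗ Φ = TensorProduct.map Φ Φ ∘ₗ Coalgebra.comul)
    (hΦ_counit : Coalgebra.counit ∘ₗ Φ = Coalgebra.counit)
    (h3 : Φ ∘ₗ mbar k Φ m = mbar k Φ m ∘ₗ TensorProduct.map LinearMap.id Φ)
    (h4 : m ∘ₗ TensorProduct.map LinearMap.id m
      = m ∘ₗ TensorProduct.map (mbar k Φ m) LinearMap.id ∘ₗ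
          (TensorProduct.assoc k H H H).symm.toLinearMap)
    (h5 : m ∘ₗ TensorProduct.map LinearMap.id (LinearMap.mul' k H)
      = (LinearMap.mul' k H) ∘ₗ TensorProduct.map m m ∘ₗ
          (TensorProduct.tensorTensorTensorComm k H H H H).toLinearMap ∘ₗ
          TensorProduct.map Coalgebra.comul LinearMap.id)
    (hΦ1 : Φ 1 = 1) :
    Φ ∘ₗ Φ = Φ :=
  stmt11_general k H m Φ hm_comul hm_counit h3 h5 hΦ1
end

section
/- Let (H, m, Φ) be a cocommutative weak twisted post-Hopf algebra over a field k with μ̄(a ⊗ b) := Φ(a₁)·m(a₂ ⊗ b) satisfying μ̄(1 ⊗ a) = a, and let S : H → H satisfy μ̄(a₁ ⊗ S(a₂)) = ε(a)·1 for all a ∈ H. If also μ̄(S(a₁) ⊗ a₂) = ε(a)·1 for all a ∈ H, then Φ = id. -/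
/-!
For fixed `b`, `μ̄ (a ⊗ b)` is the convolution `(Φ ⋆ m(- ⊗ b)) a`, and the compatibility of `m`
with the product says that `b ↦ m(- ⊗ b)` is multiplicative into the convolution algebra.
Cocommutativity makes `Δ`, hence `μ̄`, a coalgebra morphism, so `μ̄ (μ̄ (a ⊗ b) ⊗ c)` can be
expanded along `Δ (a ⊗ b)`; after that, associativity of `μ̄` is associativity of convolution.
An associative product with left unit `1` and a two-sided convolution inverse `S` has `1` as a
right unit as well, and then `Φ a = Φ (μ̄ (a ⊗ 1)) = μ̄ (a ⊗ Φ 1) = a` because `Φ 1 = 1`.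
-/

open TensorProduct

open Coalgebra WithConv LinearMap

theorem apply_tmul_eq_self_of_antipode {R C : Type*} [CommSemiring R] [AddCommMonoid C]
    [Module R C] [Coalgebra R C] (μ : C ⊗[R] C →ₗ[R] C) (e : C) (S : C →ₗ[R] C)
    (assoc : ∀ a b c, μ (μ (a ⊗ₜ b) ⊗ₜ c) = μ (a ⊗ₜ μ (b ⊗ₜ c)))
    (one_left : ∀ a, μ (e ⊗ₜ a) = a)
    (hS : ∀ a, μ (map id S (comul a)) = counit (R := R) a • e)
    (hS' : ∀ a, μ (map S id (comul a)) = counit (R := R) a • e) (a : C) :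
    μ (a ⊗ₜ e) = a := by
  have hS_map : μ ∘ₗ map id S ∘ₗ comul = toSpanSingleton R C e ∘ₗ counit := LinearMap.ext hS
  have hS'_map : μ ∘ₗ map S id ∘ₗ comul = toSpanSingleton R C e ∘ₗ counit := LinearMap.ext hS'
  have hassoc :
      μ ∘ₗ lTensor C μ ∘ₗ lTensor C (map S id) ∘ₗ (TensorProduct.assoc R C C C).toLinearMap
        = μ ∘ₗ rTensor C μ ∘ₗ rTensor C (map id S) := by
    ext x y z
    simp [assoc]
  -- In Sweedler notation: `μ (a₁ ⊗ μ (S a₂ ⊗ a₃)) = μ (μ (a₁ ⊗ S a₂) ⊗ a₃)`.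
  calc μ (a ⊗ₜ e) = μ (lTensor C (toSpanSingleton R C e ∘ₗ counit) (comul a)) := by
        simp [lTensor_comp_apply]
    _ = μ (lTensor C μ (lTensor C (map S id) (lTensor C comul (comul a)))) := by
        simp only [← hS'_map, lTensor_comp, comp_apply]
    _ = μ (rTensor C μ (rTensor C (map id S) (rTensor C comul (comul a)))) := by
        rw [← coassoc_apply]
        exact LinearMap.congr_fun hassoc _
    _ = μ (rTensor C (toSpanSingleton R C e ∘ₗ counit) (comul a)) := by
        simp only [← hS_map, rTensor_comp, comp_apply]
    _ = a := by simp [rTensor_comp_apply, one_left]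

section actConv

variable {R A : Type*} [CommSemiring R] [Semiring A] [Algebra R A]

noncomputable def actConv (m : A ⊗[R] A →ₗ[R] A) : A →ₗ[R] WithConv (A →ₗ[R] A) :=
  (WithConv.linearEquiv R (A →ₗ[R] A)).symm.toLinearMap ∘ₗ (TensorProduct.curry m).flip

@[simp]
lemma actConv_apply (m : A ⊗[R] A →ₗ[R] A) (b x : A) : actConv m b x = m (x ⊗ₜ b) := rfl

lemma actConv_mul [Coalgebra R A] (m : A ⊗[R] A →ₗ[R] A)
    (h5 : m ∘ₗ TensorProduct.map LinearMap.id (LinearMap.mul' R A)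
      = (LinearMap.mul' R A) ∘ₗ TensorProduct.map m m ∘ₗ
          (TensorProduct.tensorTensorTensorComm R A A A A).toLinearMap ∘ₗ
          TensorProduct.map Coalgebra.comul LinearMap.id)
    (u v : A) :
    actConv m (u * v) = actConv m u * actConv m v := by
  ext x
  have := LinearMap.congr_fun h5 (x ⊗ₜ (u ⊗ₜ v))
  simp [(ℛ R x).convMul_apply, ← (ℛ R x).eq, sum_tmul] at this ⊢
  exact this

end actConv

section mbar

variable {k H : Type*} [Field k] [Ring H] [HopfAlgebra k H]

lemma mbar_tmul (Φ : H →ₗ[k] H) (m : H ⊗[k] H →ₗ[k] H) (a b : H) :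
    mbar k Φ m (a ⊗ₜ b) = (toConv Φ * actConv m b) a := by
  simp [mbar, (ℛ k a).convMul_apply, ← (ℛ k a).eq, sum_tmul]

lemma map_one_eq_one_of_mbar (Φ : H →ₗ[k] H) (m : H ⊗[k] H →ₗ[k] H)
    (h4 : m ∘ₗ TensorProduct.map LinearMap.id m
      = m ∘ₗ TensorProduct.map (mbar k Φ m) LinearMap.id ∘ₗ
          (TensorProduct.assoc k H H H).symm.toLinearMap)
    (hmbar1 : ∀ a : H, mbar k Φ m ((1 : H) ⊗ₜ[k] a) = a) : Φ 1 = 1 := by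
  have hleft (b : H) : Φ 1 * m (1 ⊗ₜ b) = b := by
    simpa [mbar, Algebra.TensorProduct.one_def] using hmbar1 b
  have hm11 : m (1 ⊗ₜ m (1 ⊗ₜ 1)) = m (1 ⊗ₜ 1) := by
    simpa [hmbar1] using LinearMap.congr_fun h4 (1 ⊗ₜ (1 ⊗ₜ 1))
  have hu : m (1 ⊗ₜ 1) = 1 :=
    calc m (1 ⊗ₜ 1) = Φ 1 * m (1 ⊗ₜ m (1 ⊗ₜ 1)) := (hleft _).symm
      _ = 1 := by rw [hm11, hleft]
  simpa [hu] using hleft 1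

variable [IsCocomm k H]

noncomputable def mbarCoalgHom (Φ : H →ₗc[k] H) (m : H ⊗[k] H →ₗc[k] H) : H ⊗[k] H →ₗc[k] H :=
  (Bialgebra.mulCoalgHom k H).comp <| (Coalgebra.TensorProduct.map Φ m).comp <|
    (Coalgebra.TensorProduct.assoc k k H H H).toCoalgHom.comp <|
      CoalgHom.rTensor H (comulCoalgHom k H)

lemma mbarCoalgHom_apply (Φ : H →ₗc[k] H) (m : H ⊗[k] H →ₗc[k] H) (x : H ⊗[k] H) :
    mbarCoalgHom Φ m x = mbar k Φ m x := rfl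

lemma mbar_assoc (Φ : H →ₗc[k] H) (m : H ⊗[k] H →ₗc[k] H)
    (h3 : (Φ : H →ₗ[k] H) ∘ₗ mbar k Φ m = mbar k Φ m ∘ₗ TensorProduct.map LinearMap.id Φ)
    (h4 : (m : H ⊗[k] H →ₗ[k] H) ∘ₗ TensorProduct.map LinearMap.id m
      = m ∘ₗ TensorProduct.map (mbar k Φ m) LinearMap.id ∘ₗ
          (TensorProduct.assoc k H H H).symm.toLinearMap)
    (h5 : (m : H ⊗[k] H →ₗ[k] H) ∘ₗ TensorProduct.map LinearMap.id (LinearMap.mul' k H)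
      = (LinearMap.mul' k H) ∘ₗ TensorProduct.map m m ∘ₗ
          (TensorProduct.tensorTensorTensorComm k H H H H).toLinearMap ∘ₗ
          TensorProduct.map Coalgebra.comul LinearMap.id)
    (a b c : H) :
    mbar k Φ m (mbar k Φ m (a ⊗ₜ b) ⊗ₜ c) = mbar k Φ m (a ⊗ₜ mbar k Φ m (b ⊗ₜ c)) := by
  have h3' (x y : H) : Φ (mbar k Φ m (x ⊗ₜ y)) = mbar k Φ m (x ⊗ₜ Φ y) := by
    simpa using LinearMap.congr_fun h3 (x ⊗ₜ y)
  have h4' (x y z : H) : m (mbar k Φ m (x ⊗ₜ y) ⊗ₜ z) = m (x ⊗ₜ m (y ⊗ₜ z)) := by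
    simpa using (LinearMap.congr_fun h4 (x ⊗ₜ (y ⊗ₜ z))).symm
  set rb := ℛ k b
  have lhs : mbar k Φ m (mbar k Φ m (a ⊗ₜ b) ⊗ₜ c) = ∑ p ∈ rb.index,
      (toConv (Φ : H →ₗ[k] H) * actConv (m : H ⊗[k] H →ₗ[k] H) (Φ (rb.left p)) *
        actConv (m : H ⊗[k] H →ₗ[k] H) (m (rb.right p ⊗ₜ c))) a := by
    rw [mbar_tmul, ← mbarCoalgHom_apply,
      (((ℛ k a).tmul rb).induced (mbarCoalgHom Φ m)).convMul_apply]
    simp only [Repr.induced_index, Repr.induced_left, Repr.induced_right, Repr.tmul_index,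
      Repr.tmul_left, Repr.tmul_right, Function.comp_apply, Finset.sum_product_right]
    refine Finset.sum_congr rfl fun p _ => ?_
    rw [(ℛ k a).convMul_apply]
    refine Finset.sum_congr rfl fun i _ => ?_
    simp only [mbarCoalgHom_apply, LinearMap.coe_coe, actConv_apply]
    rw [h3', h4', mbar_tmul]
  have rhs : mbar k Φ m (a ⊗ₜ mbar k Φ m (b ⊗ₜ c)) = ∑ p ∈ rb.index,
      (toConv (Φ : H →ₗ[k] H) * (actConv (m : H ⊗[k] H →ₗ[k] H) (Φ (rb.left p)) *
        actConv (m : H ⊗[k] H →ₗ[k] H) (m (rb.right p ⊗ₜ c)))) a := by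
    rw [mbar_tmul, mbar_tmul, rb.convMul_apply, map_sum]
    simp [actConv_mul _ h5, Finset.mul_sum]
  rw [lhs, rhs]
  simp only [mul_assoc]

end mbar

theorem stmt15 (k H : Type*) [Field k] [Ring H] [HopfAlgebra k H]
    (m : H ⊗[k] H →ₗ[k] H) (Φ : H →ₗ[k] H)
    (hm_comul : Coalgebra.comul ∘ₗ m
      = (TensorProduct.map m m) ∘ₗ (TensorProduct.tensorTensorTensorComm k H H H H).toLinearMap
          ∘ₗ (TensorProduct.map Coalgebra.comul Coalgebra.comul))
    (hm_counit : Coalgebra.counit ∘ₗ m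
      = (TensorProduct.lid k k).toLinearMap ∘ₗ
          TensorProduct.map Coalgebra.counit Coalgebra.counit)
    (hΦ_comul : Coalgebra.comul ∘ₗ Φ = TensorProduct.map Φ Φ ∘ₗ Coalgebra.comul)
    (hΦ_counit : Coalgebra.counit ∘ₗ Φ = Coalgebra.counit)
    (h3 : Φ ∘ₗ mbar k Φ m = mbar k Φ m ∘ₗ TensorProduct.map LinearMap.id Φ)
    (h4 : m ∘ₗ TensorProduct.map LinearMap.id m
      = m ∘ₗ TensorProduct.map (mbar k Φ m) LinearMap.id ∘ₗ
          (TensorProduct.assoc k H H H).symm.toLinearMap)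
    (h5 : m ∘ₗ TensorProduct.map LinearMap.id (LinearMap.mul' k H)
      = (LinearMap.mul' k H) ∘ₗ TensorProduct.map m m ∘ₗ
          (TensorProduct.tensorTensorTensorComm k H H H H).toLinearMap ∘ₗ
          TensorProduct.map Coalgebra.comul LinearMap.id)
    (hcoc : ∀ a : H, (TensorProduct.comm k H H) (Coalgebra.comul (R := k) a)
      = Coalgebra.comul a)
    (hmbar1 : ∀ a : H, mbar k Φ m ((1 : H) ⊗ₜ[k] a) = a)
    (S : H →ₗ[k] H)
    (hS : ∀ a : H, mbar k Φ m (TensorProduct.map LinearMap.id S (Coalgebra.comul a))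
      = (Coalgebra.counit (R := k) a) • (1 : H))
    (hS' : ∀ a : H, mbar k Φ m (TensorProduct.map S LinearMap.id (Coalgebra.comul a))
      = (Coalgebra.counit (R := k) a) • (1 : H)) :
    Φ = LinearMap.id := by
  have : IsCocomm k H := ⟨LinearMap.ext hcoc⟩
  let Φc : H →ₗc[k] H :=
    { Φ with counit_comp := hΦ_counit, map_comp_comul := hΦ_comul.symm }
  let mc : H ⊗[k] H →ₗc[k] H :=
    { m with
      counit_comp := by rw [hm_counit]; ext; simp [mul_comm]
      map_comp_comul := by
        rw [hm_comul]; ext; simp [AlgebraTensorModule.tensorTensorTensorComm_eq] }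
  have hunit : ∀ a, mbar k Φ m (a ⊗ₜ 1) = a :=
    apply_tmul_eq_self_of_antipode _ 1 S (mbar_assoc Φc mc h3 h4 h5) hmbar1 hS hS'
  have hΦ1 : Φ 1 = 1 := map_one_eq_one_of_mbar Φ m h4 hmbar1
  ext a
  calc Φ a = Φ (mbar k Φ m (a ⊗ₜ 1)) := by rw [hunit]
    _ = mbar k Φ m (a ⊗ₜ Φ 1) := LinearMap.congr_fun h3 (a ⊗ₜ 1)
    _ = a := by rw [hΦ1, hunit]
end
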